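/- Let n ≥ 2, let ν ∈ ℝⁿ with |ν| = 1, c ∈ ℝ, and let H = {x ∈ ℝⁿ : ⟨x, ν⟩ = c} be an affine hyperplane. Let L₀ > 0 and let γ: [-1,1] → ℝⁿ be a twice continuously differentiable immersion with L(γ) = L₀, γ(−1), γ(1) ∈ H, and the unit tangents ∂_sγ(−1), ∂_sγ(1) parallel to ν (orthogonal to H). Then E(γ) ≥ π²/L₀. -/

import Mathlib

open Set MeasureTheory Filter
open scoped RealInnerProductSpace

noncomputable section

variable {n : ℕ}

/-- Arc-length derivative along the curve `g` of a field `f`. -/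
def aderiv {F : Type*} [NormedAddCommGroup F] [NormedSpace ℝ F]
    (g : ℝ → EuclideanSpace ℝ (Fin n)) (f : ℝ → F) : ℝ → F :=
  fun x => ‖deriv g x‖⁻¹ • deriv f x

/-- Unit tangent `∂ₛγ`. -/
def utang (g : ℝ → EuclideanSpace ℝ (Fin n)) : ℝ → EuclideanSpace ℝ (Fin n) :=
  aderiv g g

/-- Normal projection along `g`. -/
def nperp (g f : ℝ → EuclideanSpace ℝ (Fin n)) : ℝ → EuclideanSpace ℝ (Fin n) :=
  fun x => f x - ⟪f x, utang g x⟫ • utang g x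

/-- Curvature vector `κ = ∂ₛ²γ`. -/
def curvV (g : ℝ → EuclideanSpace ℝ (Fin n)) : ℝ → EuclideanSpace ℝ (Fin n) :=
  aderiv g (utang g)

/-- Projected arc-length derivative `∂ₛ^⊥`. -/
def aderivP (g f : ℝ → EuclideanSpace ℝ (Fin n)) : ℝ → EuclideanSpace ℝ (Fin n) :=
  nperp g (aderiv g f)

/-- Iterated projected arc-length derivative `(∂ₛ^⊥)^k`. -/
def aderivPIter (g : ℝ → EuclideanSpace ℝ (Fin n)) :
    ℕ → (ℝ → EuclideanSpace ℝ (Fin n)) → ℝ → EuclideanSpace ℝ (Fin n)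
  | 0, f => f
  | k + 1, f => aderivP g (aderivPIter g k f)

/-- Iterated full arc-length derivative `∂ₛ^k`. -/
def aderivIter (g : ℝ → EuclideanSpace ℝ (Fin n)) :
    ℕ → (ℝ → EuclideanSpace ℝ (Fin n)) → ℝ → EuclideanSpace ℝ (Fin n)
  | 0, f => f
  | k + 1, f => aderiv g (aderivIter g k f)

/-- Elastic energy `E(γ) = ∫ |κ|² ds`. -/
def elE (g : ℝ → EuclideanSpace ℝ (Fin n)) : ℝ :=
  ∫ x in (-1:ℝ)..1, ‖curvV g x‖ ^ 2 * ‖deriv g x‖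

/-- Length `L(γ) = ∫ ds`. -/
def elL (g : ℝ → EuclideanSpace ℝ (Fin n)) : ℝ :=
  ∫ x in (-1:ℝ)..1, ‖deriv g x‖

/-- Energy gradient `∇E(γ) = 2(∂ₛ^⊥)²κ + |κ|²κ`. -/
def gradElE (g : ℝ → EuclideanSpace ℝ (Fin n)) : ℝ → EuclideanSpace ℝ (Fin n) :=
  fun x => (2:ℝ) • aderivPIter g 2 (curvV g) x + ‖curvV g x‖ ^ 2 • curvV g x

/-- Lagrange multiplier `λ(γ)`. -/
def lagMul (g : ℝ → EuclideanSpace ℝ (Fin n)) : ℝ :=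
  (∫ x in (-1:ℝ)..1, ⟪gradElE g x, curvV g x⟫ * ‖deriv g x‖) / elE g

/-- Time derivative `∂ₜγ` of a family. -/
def timeD (γ : ℝ → ℝ → EuclideanSpace ℝ (Fin n)) : ℝ → ℝ → EuclideanSpace ℝ (Fin n) :=
  fun t x => deriv (fun s => γ s x) t

/-- Tangential speed `φ = ⟨∂ₜγ, ∂ₛγ⟩`. -/
def tanSpeed (γ : ℝ → ℝ → EuclideanSpace ℝ (Fin n)) : ℝ → ℝ → ℝ :=
  fun t x => ⟪timeD γ t x, utang (γ t) x⟫

/-- Normal velocity `V = ∂ₜγ − φ ∂ₛγ`. -/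
def normalVel (γ : ℝ → ℝ → EuclideanSpace ℝ (Fin n)) : ℝ → ℝ → EuclideanSpace ℝ (Fin n) :=
  fun t x => timeD γ t x - tanSpeed γ t x • utang (γ t) x

/-- Normal time derivative `∂ₜ^⊥N` of a field along the family γ. -/
def timeDPerp (γ N : ℝ → ℝ → EuclideanSpace ℝ (Fin n)) : ℝ → ℝ → EuclideanSpace ℝ (Fin n) :=
  fun t x => deriv (fun s => N s x) t
    - ⟪deriv (fun s => N s x) t, utang (γ t) x⟫ • utang (γ t) x

/-- Shape operator `S_p = −Dξ(p)`. -/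
def shapeOp (ξ : EuclideanSpace ℝ (Fin n) → EuclideanSpace ℝ (Fin n))
    (p v : EuclideanSpace ℝ (Fin n)) : EuclideanSpace ℝ (Fin n) :=
  -(fderiv ℝ ξ p v)

/-- `L²(ds)` norm of a field along `g`. -/
def l2ds (g f : ℝ → EuclideanSpace ℝ (Fin n)) : ℝ :=
  Real.sqrt (∫ x in (-1:ℝ)..1, ‖f x‖ ^ 2 * ‖deriv g x‖)

/-- Fixed-length free-boundary elastic flow on `[0,T)`. -/
def IsFLFBEF (T : ℝ) (ξ : EuclideanSpace ℝ (Fin n) → EuclideanSpace ℝ (Fin n))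
    (τ : ℝ → ℝ) (γ : ℝ → ℝ → EuclideanSpace ℝ (Fin n)) : Prop :=
  ContDiff ℝ (⊤ : ℕ∞) (fun p : ℝ × ℝ => γ p.1 p.2) ∧
  (∀ t ∈ Ico (0:ℝ) T, ∀ x ∈ Icc (-1:ℝ) 1, deriv (γ t) x ≠ 0) ∧
  (∀ t ∈ Ico (0:ℝ) T, 0 < elE (γ t)) ∧
  (∀ t ∈ Ico (0:ℝ) T, ∀ x ∈ Icc (-1:ℝ) 1,
    timeD γ t x = -(gradElE (γ t) x - lagMul (γ t) • curvV (γ t) x)) ∧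
  (∀ t ∈ Ico (0:ℝ) T, ∀ x ∈ ({-1, 1} : Set ℝ),
    ⟪timeD γ t x, utang (γ t) x⟫ = 0 ∧
    utang (γ t) x = τ x • ξ (γ t x) ∧
    ‖ξ (γ t x)‖ = 1 ∧
    aderivP (γ t) (curvV (γ t)) x = -(τ x • shapeOp ξ (γ t x) (curvV (γ t) x)))

/-!
The unit tangent `T = ∂ₛγ` runs on the unit sphere, so its angle `arccos ⟪T, ν⟫` with `ν`
changes by at most the spherical length `∫ ‖∂ₓT‖ dx = ∫ |κ| ds`. The boundary conditions put
`T(±1)` at `±ν`, while `∫ ⟪∂ₓγ, ν⟫ dx = ⟪γ 1 - γ (-1), ν⟫ = 0` forces `T` through the equator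
`⟪T, ν⟫ = 0`; hence the total curvature `∫ |κ| ds` is at least `π/2 + π/2 = π`, and
Cauchy–Schwarz gives `π² ≤ (∫ |κ| ds)² ≤ E(γ) L(γ)`.
-/

open Topology Real

theorem mul_abs_div_sqrt_one_sub_sq_le {c v v' N : ℝ} (hc0 : 0 ≤ c) (hc1 : c < 1)
    (hv : |v| ≤ 1) (hN : 0 ≤ N) (hv' : |v'| ≤ N * √(1 - v ^ 2)) :
    c * |v'| / √(1 - (c * v) ^ 2) ≤ N := by
  have hv2 : v ^ 2 ≤ 1 := by rw [← sq_abs]; nlinarith [abs_nonneg v]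
  have hcv : (c * v) ^ 2 ≤ c ^ 2 := by
    rw [mul_pow]; exact mul_le_of_le_one_right (sq_nonneg c) hv2
  have hpos : 0 < 1 - (c * v) ^ 2 := by nlinarith
  have hsqrt : c * √(1 - v ^ 2) ≤ √(1 - (c * v) ^ 2) := by
    rw [← sqrt_sq hc0, ← sqrt_mul (sq_nonneg c), sqrt_sq hc0]
    exact sqrt_le_sqrt (by nlinarith)
  rw [div_le_iff₀ (sqrt_pos.mpr hpos)]
  calc c * |v'| ≤ c * (N * √(1 - v ^ 2)) := mul_le_mul_of_nonneg_left hv' hc0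
    _ = N * (c * √(1 - v ^ 2)) := by ring
    _ ≤ N * √(1 - (c * v) ^ 2) := mul_le_mul_of_nonneg_left hsqrt hN

theorem exists_mem_Icc_eq_zero_of_integral_eq_zero {f : ℝ → ℝ} {a b : ℝ} (hab : a < b)
    (hf : ContinuousOn f (Icc a b)) (h : ∫ x in a..b, f x = 0) : ∃ m ∈ Icc a b, f m = 0 := by
  have hint : IntervalIntegrable f volume a b := hf.intervalIntegrable_of_Icc hab.le
  obtain ⟨p, hp, hfp⟩ : ∃ p ∈ Icc a b, f p ≤ 0 := by
    by_contra! hpos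
    have := intervalIntegral.intervalIntegral_pos_of_pos_on hint
      (fun x hx => hpos x (Ioo_subset_Icc_self hx)) hab
    linarith
  obtain ⟨q, hq, hfq⟩ : ∃ q ∈ Icc a b, 0 ≤ f q := by
    by_contra! hneg
    have := intervalIntegral.intervalIntegral_pos_of_pos_on hint.neg
      (fun x hx => neg_pos.mpr (hneg x (Ioo_subset_Icc_self hx))) hab
    simp only [Pi.neg_apply, intervalIntegral.integral_neg] at this
    linarith
  exact isPreconnected_Icc.intermediate_value hp hq hf ⟨hfp, hfq⟩

theorem sq_integral_mul_le_integral_sq_mul_mul_integral {f w : ℝ → ℝ} {a b : ℝ} (hab : a ≤ b)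
    (hf : ContinuousOn f (Icc a b)) (hw : ContinuousOn w (Icc a b))
    (hw0 : ∀ x ∈ Icc a b, 0 ≤ w x) :
    (∫ x in a..b, f x * w x) ^ 2 ≤ (∫ x in a..b, f x ^ 2 * w x) * ∫ x in a..b, w x := by
  have hint : ∀ {g : ℝ → ℝ}, ContinuousOn g (Icc a b) → IntervalIntegrable g volume a b :=
    fun hg => hg.intervalIntegrable_of_Icc hab
  have hquad : ∀ t : ℝ, 0 ≤ (∫ x in a..b, f x ^ 2 * w x) * (t * t)
      + (2 * ∫ x in a..b, f x * w x) * t + ∫ x in a..b, w x := by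
    intro t
    have h0 : 0 ≤ ∫ x in a..b, (t * f x + 1) ^ 2 * w x :=
      intervalIntegral.integral_nonneg hab fun x hx => mul_nonneg (sq_nonneg _) (hw0 x hx)
    have hexp : (fun x => (t * f x + 1) ^ 2 * w x)
        = fun x => t * t * (f x ^ 2 * w x) + (2 * t * (f x * w x) + w x) := by
      funext x; ring
    have hf2w : IntervalIntegrable (fun x => f x ^ 2 * w x) volume a b := hint ((hf.pow 2).mul hw)
    have hfw : IntervalIntegrable (fun x => f x * w x) volume a b := hint (hf.mul hw)
    rw [hexp, intervalIntegral.integral_add (hf2w.const_mul _) ((hfw.const_mul _).add (hint hw)),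
      intervalIntegral.integral_add (hfw.const_mul _) (hint hw),
      intervalIntegral.integral_const_mul, intervalIntegral.integral_const_mul] at h0
    linarith
  have hdisc := discrim_le_zero hquad
  rw [discrim] at hdisc
  nlinarith [hdisc]

section UnitCurve

variable {E : Type*} [NormedAddCommGroup E] [InnerProductSpace ℝ E]

theorem inner_deriv_self_eq_zero_of_eventually_norm_eq_one {T : ℝ → E} {x : ℝ}
    (hT : DifferentiableAt ℝ T x) (h : ∀ᶠ y in 𝓝 x, ‖T y‖ = 1) :
    ⟪deriv T x, T x⟫ = 0 := by
  have hsq : HasDerivAt (fun y => ⟪T y, T y⟫) (⟪T x, deriv T x⟫ + ⟪deriv T x, T x⟫) x :=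
    hT.hasDerivAt.inner ℝ hT.hasDerivAt
  have hconst : (fun y => ⟪T y, T y⟫) =ᶠ[𝓝 x] fun _ => (1 : ℝ) := by
    filter_upwards [h] with y hy
    rw [real_inner_self_eq_norm_sq, hy, one_pow]
  have h0 := hsq.unique ((hasDerivAt_const x (1 : ℝ)).congr_of_eventuallyEq hconst)
  rw [real_inner_comm] at h0
  linarith

theorem abs_inner_le_norm_mul_sqrt_one_sub_sq {u w ν : E} (hu : ‖u‖ = 1) (hν : ‖ν‖ = 1)
    (hwu : ⟪w, u⟫ = 0) : |⟪w, ν⟫| ≤ ‖w‖ * √(1 - ⟪u, ν⟫ ^ 2) := by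
  have hproj : ⟪w, ν⟫ = ⟪w, ν - ⟪u, ν⟫ • u⟫ := by
    rw [inner_sub_right, real_inner_smul_right, hwu, mul_zero, sub_zero]
  have hnorm : ‖ν - ⟪u, ν⟫ • u‖ = √(1 - ⟪u, ν⟫ ^ 2) := by
    rw [← sqrt_sq (norm_nonneg _), norm_sub_sq_real, norm_smul, real_inner_smul_right,
      real_inner_comm, hu, hν, norm_eq_abs, mul_one, sq_abs]
    ring_nf
  rw [hproj, ← hnorm]
  exact abs_real_inner_le_norm _ _

variable {T : ℝ → E} {ν : E} {a b : ℝ}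

/- `arccos` is not differentiable at `±1`; scaling its argument by `c < 1` keeps it inside
`(-1, 1)`, and the bound survives the limit `c → 1`. -/
theorem arccos_mul_inner_sub_le_integral_norm_deriv {c : ℝ} (hab : a ≤ b) (hc0 : 0 ≤ c)
    (hc1 : c < 1) (hT : ∀ x ∈ Icc a b, DifferentiableAt ℝ T x)
    (hT' : ContinuousOn (deriv T) (Icc a b)) (hnorm : ∀ x ∈ Icc a b, ‖T x‖ = 1)
    (horth : ∀ x ∈ Icc a b, ⟪deriv T x, T x⟫ = 0) (hν : ‖ν‖ = 1) :
    arccos (c * ⟪T b, ν⟫) - arccos (c * ⟪T a, ν⟫) ≤ ∫ x in a..b, ‖deriv T x‖ := by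
  have hv : ∀ x ∈ Icc a b, |⟪T x, ν⟫| ≤ 1 := fun x hx => by
    simpa [hnorm x hx, hν] using abs_real_inner_le_norm (T x) ν
  have hcv : ∀ x ∈ Icc a b, |c * ⟪T x, ν⟫| < 1 := fun x hx => by
    rw [abs_mul, abs_of_nonneg hc0]
    nlinarith [hv x hx, abs_nonneg ⟪T x, ν⟫]
  have hderiv : ∀ x ∈ Icc a b, HasDerivAt (fun y => arccos (c * ⟪T y, ν⟫))
      (-(1 / √(1 - (c * ⟪T x, ν⟫) ^ 2)) * (c * ⟪deriv T x, ν⟫)) x := fun x hx => by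
    obtain ⟨hlo, hhi⟩ := abs_lt.mp (hcv x hx)
    have hinner : HasDerivAt (fun y => c * ⟪T y, ν⟫) (c * ⟪deriv T x, ν⟫) x := by
      simpa using ((hT x hx).hasDerivAt.inner ℝ (hasDerivAt_const x ν)).const_mul c
    exact HasDerivAt.comp (h₂ := arccos) x (hasDerivAt_arccos hlo.ne' hhi.ne) hinner
  refine intervalIntegral.sub_le_integral_of_hasDeriv_right_of_le hab
    (fun x hx => (hderiv x hx).continuousAt.continuousWithinAt)
    (fun x hx => (hderiv x (Ioo_subset_Icc_self hx)).hasDerivWithinAt)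
    hT'.norm.integrableOn_Icc (fun x hx => ?_)
  have hx := Ioo_subset_Icc_self hx
  calc -(1 / √(1 - (c * ⟪T x, ν⟫) ^ 2)) * (c * ⟪deriv T x, ν⟫)
      ≤ c * |⟪deriv T x, ν⟫| / √(1 - (c * ⟪T x, ν⟫) ^ 2) := by
        rw [neg_mul, one_div_mul_eq_div]
        refine (neg_le_abs _).trans_eq ?_
        rw [abs_div, abs_mul, abs_of_nonneg hc0, abs_of_nonneg (sqrt_nonneg _)]
    _ ≤ ‖deriv T x‖ := mul_abs_div_sqrt_one_sub_sq_le hc0 hc1 (hv x hx) (norm_nonneg _)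
        (abs_inner_le_norm_mul_sqrt_one_sub_sq (hnorm x hx) hν (horth x hx))

theorem arccos_inner_sub_le_integral_norm_deriv (hab : a ≤ b)
    (hT : ∀ x ∈ Icc a b, DifferentiableAt ℝ T x)
    (hT' : ContinuousOn (deriv T) (Icc a b)) (hnorm : ∀ x ∈ Icc a b, ‖T x‖ = 1)
    (horth : ∀ x ∈ Icc a b, ⟪deriv T x, T x⟫ = 0) (hν : ‖ν‖ = 1) :
    arccos ⟪T b, ν⟫ - arccos ⟪T a, ν⟫ ≤ ∫ x in a..b, ‖deriv T x‖ := by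
  have hlim : Tendsto (fun c => arccos (c * ⟪T b, ν⟫) - arccos (c * ⟪T a, ν⟫))
      (𝓝[<] 1) (𝓝 (arccos ⟪T b, ν⟫ - arccos ⟪T a, ν⟫)) := by
    have hcont : Continuous fun c => arccos (c * ⟪T b, ν⟫) - arccos (c * ⟪T a, ν⟫) := by
      fun_prop
    simpa using hcont.continuousWithinAt.tendsto (x := 1) (s := Iio 1)
  refine le_of_tendsto hlim ?_
  filter_upwards [Ioo_mem_nhdsLT (zero_lt_one' ℝ)] with c hc
  exact arccos_mul_inner_sub_le_integral_norm_deriv hab hc.1.le hc.2 hT hT' hnorm horth hν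

theorem abs_arccos_inner_sub_le_integral_norm_deriv (hab : a ≤ b)
    (hT : ∀ x ∈ Icc a b, DifferentiableAt ℝ T x)
    (hT' : ContinuousOn (deriv T) (Icc a b)) (hnorm : ∀ x ∈ Icc a b, ‖T x‖ = 1)
    (horth : ∀ x ∈ Icc a b, ⟪deriv T x, T x⟫ = 0) (hν : ‖ν‖ = 1) :
    |arccos ⟪T b, ν⟫ - arccos ⟪T a, ν⟫| ≤ ∫ x in a..b, ‖deriv T x‖ := by
  have hneg := arccos_inner_sub_le_integral_norm_deriv hab hT hT' hnorm horth
    (ν := -ν) (by rwa [norm_neg])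
  simp only [inner_neg_right, arccos_neg] at hneg
  exact abs_sub_le_iff.mpr ⟨arccos_inner_sub_le_integral_norm_deriv hab hT hT' hnorm horth hν,
    by linarith⟩

theorem pi_le_integral_norm_deriv {m : ℝ} (hm : m ∈ Icc a b)
    (hT : ∀ x ∈ Icc a b, DifferentiableAt ℝ T x)
    (hT' : ContinuousOn (deriv T) (Icc a b)) (hnorm : ∀ x ∈ Icc a b, ‖T x‖ = 1)
    (horth : ∀ x ∈ Icc a b, ⟪deriv T x, T x⟫ = 0) (hν : ‖ν‖ = 1)
    (ha : |⟪T a, ν⟫| = 1) (hb : |⟪T b, ν⟫| = 1) (hTm : ⟪T m, ν⟫ = 0) :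
    π ≤ ∫ x in a..b, ‖deriv T x‖ := by
  have hend : ∀ {v : ℝ}, |v| = 1 → |arccos v - π / 2| = π / 2 := fun hv => by
    rcases abs_eq (zero_le_one' ℝ) |>.mp hv with rfl | rfl
    · rw [arccos_one, zero_sub, abs_neg, abs_of_pos (by positivity)]
    · rw [arccos_neg_one, show π - π / 2 = π / 2 by ring, abs_of_pos (by positivity)]
  have ham : Icc a m ⊆ Icc a b := Icc_subset_Icc_right hm.2
  have hmb : Icc m b ⊆ Icc a b := Icc_subset_Icc_left hm.1
  have h₁ := abs_arccos_inner_sub_le_integral_norm_deriv hm.1 (fun x hx => hT x (ham hx))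
    (hT'.mono ham) (fun x hx => hnorm x (ham hx)) (fun x hx => horth x (ham hx)) hν
  have h₂ := abs_arccos_inner_sub_le_integral_norm_deriv hm.2 (fun x hx => hT x (hmb hx))
    (hT'.mono hmb) (fun x hx => hnorm x (hmb hx)) (fun x hx => horth x (hmb hx)) hν
  rw [hTm, arccos_zero, abs_sub_comm] at h₁
  rw [hTm, arccos_zero] at h₂
  rw [← intervalIntegral.integral_add_adjacent_intervals
    ((hT'.mono ham).norm.intervalIntegrable_of_Icc hm.1)
    ((hT'.mono hmb).norm.intervalIntegrable_of_Icc hm.2)]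
  linarith [hend ha, hend hb]

end UnitCurve

section Curve

variable {γ : ℝ → EuclideanSpace ℝ (Fin n)} {x : ℝ}

theorem norm_utang (hx : deriv γ x ≠ 0) : ‖utang γ x‖ = 1 := by
  rw [utang, aderiv, norm_smul, norm_inv, norm_norm, inv_mul_cancel₀ (norm_ne_zero_iff.mpr hx)]

theorem contDiffOn_utang (hγ : ContDiff ℝ 2 γ) :
    ContDiffOn ℝ 1 (utang γ) {x | deriv γ x ≠ 0} := by
  have hd : ContDiffOn ℝ 1 (deriv γ) {x | deriv γ x ≠ 0} :=
    (hγ.iterate_deriv' 1 1).contDiffOn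
  exact ((hd.norm ℝ fun _ hx => hx).inv fun _ hx => norm_ne_zero_iff.mpr hx).smul hd

theorem isOpen_setOf_deriv_ne_zero (hγ : ContDiff ℝ 1 γ) : IsOpen {x | deriv γ x ≠ 0} :=
  isOpen_ne_fun (hγ.continuous_deriv le_rfl) continuous_const

theorem continuousOn_deriv_utang (hγ : ContDiff ℝ 2 γ) :
    ContinuousOn (deriv (utang γ)) {x | deriv γ x ≠ 0} :=
  (contDiffOn_utang hγ).continuousOn_deriv_of_isOpen
    (isOpen_setOf_deriv_ne_zero (hγ.of_le one_le_two)) le_rfl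

theorem continuousOn_curvV (hγ : ContDiff ℝ 2 γ) : ContinuousOn (curvV γ) {x | deriv γ x ≠ 0} :=
  (((hγ.continuous_deriv one_le_two).norm.continuousOn.inv₀ fun _ hx => norm_ne_zero_iff.mpr hx)
    |>.smul (continuousOn_deriv_utang hγ))

theorem norm_curvV_mul_norm_deriv (hx : deriv γ x ≠ 0) :
    ‖curvV γ x‖ * ‖deriv γ x‖ = ‖deriv (utang γ) x‖ := by
  rw [curvV, aderiv, norm_smul, norm_inv, norm_norm, mul_right_comm,
    inv_mul_cancel₀ (norm_ne_zero_iff.mpr hx), one_mul]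

theorem inner_utang_eq_zero_of_inner_deriv_eq_zero {ν : EuclideanSpace ℝ (Fin n)}
    (h : ⟪deriv γ x, ν⟫ = 0) : ⟪utang γ x, ν⟫ = 0 := by
  rw [utang, aderiv, real_inner_smul_left, h, mul_zero]

theorem abs_inner_utang_eq_one {ν : EuclideanSpace ℝ (Fin n)} {r : ℝ} (hx : deriv γ x ≠ 0)
    (hν : ‖ν‖ = 1) (h : utang γ x = r • ν) : |⟪utang γ x, ν⟫| = 1 := by
  have hr : |r| = 1 := by simpa [h, norm_smul, hν] using norm_utang hx
  rwa [h, real_inner_smul_left, real_inner_self_eq_norm_sq, hν, one_pow, mul_one]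

theorem pi_le_integral_norm_deriv_utang {ν : EuclideanSpace ℝ (Fin n)} {a b r s : ℝ}
    (hab : a < b) (hγ : ContDiff ℝ 2 γ) (himm : ∀ x ∈ Icc a b, deriv γ x ≠ 0) (hν : ‖ν‖ = 1)
    (hends : ⟪γ a, ν⟫ = ⟪γ b, ν⟫) (ha : utang γ a = r • ν) (hb : utang γ b = s • ν) :
    π ≤ ∫ x in a..b, ‖deriv (utang γ) x‖ := by
  have hU := isOpen_setOf_deriv_ne_zero (hγ.of_le one_le_two)
  have hT := contDiffOn_utang hγ
  have hTd : ∀ x ∈ Icc a b, DifferentiableAt ℝ (utang γ) x := fun x hx =>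
    (hT.differentiableOn one_ne_zero).differentiableAt (hU.mem_nhds (himm x hx))
  have hdγ : ∀ x, HasDerivAt (fun y => ⟪γ y, ν⟫) ⟪deriv γ x, ν⟫ x := fun x => by
    simpa using ((hγ.differentiable two_ne_zero) x).hasDerivAt.inner ℝ (hasDerivAt_const x ν)
  obtain ⟨m, hm, hγm⟩ := exists_mem_Icc_eq_zero_of_integral_eq_zero hab
    ((hγ.continuous_deriv one_le_two).inner continuous_const).continuousOn
    (by rw [intervalIntegral.integral_eq_sub_of_hasDerivAt (fun x _ => hdγ x)
        (((hγ.continuous_deriv one_le_two).inner continuous_const).intervalIntegrable _ _),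
        hends, sub_self])
  refine pi_le_integral_norm_deriv hm hTd
    ((continuousOn_deriv_utang hγ).mono fun x hx => himm x hx)
    (fun x hx => norm_utang (himm x hx))
    (fun x hx => inner_deriv_self_eq_zero_of_eventually_norm_eq_one (hTd x hx)
      (eventually_of_mem (hU.mem_nhds (himm x hx)) fun _ hy => norm_utang hy)) hν
    (abs_inner_utang_eq_one (himm a ⟨le_rfl, hab.le⟩) hν ha)
    (abs_inner_utang_eq_one (himm b ⟨hab.le, le_rfl⟩) hν hb)
    (inner_utang_eq_zero_of_inner_deriv_eq_zero hγm)

end Curve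

theorem statement15_general
    (n : ℕ)
    (ν : EuclideanSpace ℝ (Fin n)) (hν : ‖ν‖ = 1) (c : ℝ)
    (L₀ : ℝ) (hL : 0 < L₀)
    (γ : ℝ → EuclideanSpace ℝ (Fin n))
    (hγ : ContDiff ℝ 2 γ)
    (himm : ∀ x ∈ Icc (-1:ℝ) 1, deriv γ x ≠ 0)
    (hlen : elL γ = L₀)
    (hbm : ⟪γ (-1), ν⟫ = c) (hbp : ⟪γ 1, ν⟫ = c)
    (htm : ∃ r : ℝ, utang γ (-1) = r • ν)
    (htp : ∃ r : ℝ, utang γ 1 = r • ν) :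
    Real.pi ^ 2 / L₀ ≤ elE γ := by
  obtain ⟨r, hr⟩ := htm
  obtain ⟨s, hs⟩ := htp
  have htotal := pi_le_integral_norm_deriv_utang (by norm_num) hγ himm hν (hbm.trans hbp.symm)
    hr hs
  have hcs := sq_integral_mul_le_integral_sq_mul_mul_integral (by norm_num)
    ((continuousOn_curvV hγ).mono himm).norm (hγ.continuous_deriv one_le_two).norm.continuousOn
    fun x _ => norm_nonneg (deriv γ x)
  rw [intervalIntegral.integral_congr fun x hx =>
    norm_curvV_mul_norm_deriv (himm x (by rwa [uIcc_of_le (by norm_num)] at hx))] at hcs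
  rw [div_le_iff₀ hL, ← hlen]
  calc π ^ 2 ≤ (∫ x in (-1:ℝ)..1, ‖deriv (utang γ) x‖) ^ 2 :=
        pow_le_pow_left₀ pi_pos.le htotal 2
    _ ≤ elE γ * elL γ := hcs

/-- energy lower bound `E(γ) ≥ π²/L₀` for curves meeting a hyperplane
orthogonally at both endpoints (Proposition 4.14, flat case). -/
theorem statement15
    (n : ℕ) (hn : 2 ≤ n)
    (ν : EuclideanSpace ℝ (Fin n)) (hν : ‖ν‖ = 1) (c : ℝ)
    (L₀ : ℝ) (hL : 0 < L₀)
    (γ : ℝ → EuclideanSpace ℝ (Fin n))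
    (hγ : ContDiff ℝ 2 γ)
    (himm : ∀ x ∈ Icc (-1:ℝ) 1, deriv γ x ≠ 0)
    (hlen : elL γ = L₀)
    (hbm : ⟪γ (-1), ν⟫ = c) (hbp : ⟪γ 1, ν⟫ = c)
    (htm : ∃ r : ℝ, utang γ (-1) = r • ν)
    (htp : ∃ r : ℝ, utang γ 1 = r • ν) :
    Real.pi ^ 2 / L₀ ≤ elE γ :=
  statement15_general n ν hν c L₀ hL γ hγ himm hlen hbm hbp htm htp

end
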